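/- arXiv:2201.10415 — 4 statements merged into one kernel-verified Lean document; each statement's English description precedes it below -/
import Mathlib

section
/- Let f(t) = (2 + 4t²)π²/(t²+1)². Then f'(0) = 0, f''(0) = 0, f'''(0) = 0, and f''''(0) = -48π² < 0. In particular, f has a local maximum at t = 0. -/
/-!
Since `2 + 4t² = 2(t² + 1)² - 2t⁴`, the bienergy is `2π² - 2π² t⁴ / (t² + 1)²`. The correction
term is `t⁴` times a smooth nonpositive function, so it is bounded by `0` (local maximum at `0`)
and, by the Leibniz rule, its derivatives at `0` of order `k ≤ 4` vanish except the fourth one,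
which is `4!` times the value `-2π²` of the cofactor at `0`.
-/

open Real

theorem iteratedDeriv_pow_mul_zero {𝕜 : Type*} [NontriviallyNormedField 𝕜] {g : 𝕜 → 𝕜}
    {k m : ℕ} (hkm : k ≤ m) (hg : ContDiffAt 𝕜 k g 0) :
    iteratedDeriv k (fun x => x ^ m * g x) 0 = if k = m then (m.factorial : 𝕜) * g 0 else 0 := by
  have hpow : ContDiffAt 𝕜 k (· ^ m) (0 : 𝕜) := contDiffAt_id.pow m
  rw [iteratedDeriv_fun_mul hpow hg]
  simp only [iteratedDeriv_fun_pow_zero, Nat.cast_ite, Nat.cast_zero, mul_ite, ite_mul,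
    mul_zero, zero_mul]
  rw [Finset.sum_ite_eq']
  obtain rfl | hlt := hkm.eq_or_lt
  · simp
  · simp [hlt.ne, hlt.not_ge]

/-- The bienergy of the variation `Φ_t = (Φ + t V_ν)/√(1+t²)` of the proper
biharmonic Clifford torus in `S⁴` is `f(t) = π²(2+4t²)/(t²+1)²`.  Its first,
second and third derivatives vanish at `0`, the fourth derivative equals
`-48π² < 0`, and `f` has a local maximum at `t = 0`. -/
theorem bienergy_variation_derivatives
    (f : ℝ → ℝ) (hf : ∀ t, f t = π ^ 2 * (2 + 4 * t ^ 2) / (t ^ 2 + 1) ^ 2) :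
    iteratedDeriv 1 f 0 = 0 ∧ iteratedDeriv 2 f 0 = 0 ∧ iteratedDeriv 3 f 0 = 0 ∧
      iteratedDeriv 4 f 0 = -48 * π ^ 2 ∧ -48 * π ^ 2 < 0 ∧ IsLocalMax f 0 := by
  set h : ℝ → ℝ := fun t => -2 * π ^ 2 / (t ^ 2 + 1) ^ 2
  have hf_eq : f = fun t => 2 * π ^ 2 + t ^ 4 * h t := by
    funext t
    rw [hf]
    simp only [h]
    field_simp
    ring
  have hh_smooth : ContDiff ℝ ⊤ h :=
    contDiff_const.div (by fun_prop) fun t => by positivity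
  have hh_nonpos : ∀ t, h t ≤ 0 := fun t =>
    div_nonpos_of_nonpos_of_nonneg (by nlinarith [sq_nonneg π]) (by positivity)
  have hderiv : ∀ k, 0 < k → k ≤ 4 →
      iteratedDeriv k f 0 = if k = 4 then (Nat.factorial 4 : ℝ) * h 0 else 0 := fun k hk hk4 => by
    rw [hf_eq, iteratedDeriv_const_add hk,
      iteratedDeriv_pow_mul_zero hk4 (hh_smooth.contDiffAt.of_le (by exact_mod_cast le_top))]
  refine ⟨by simpa using hderiv 1, by simpa using hderiv 2, by simpa using hderiv 3, ?_,
    by nlinarith [pi_pos], ?_⟩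
  · rw [hderiv 4 (by norm_num) le_rfl]
    simp [h, Nat.factorial]
    ring
  · refine Filter.Eventually.of_forall fun t => ?_
    rw [hf_eq]
    nlinarith [hh_nonpos t, pow_nonneg (sq_nonneg t) 2]
end

section
/- Let Φ_t(γ,θ) = (1/√(1+t²))·((1/2)(1+t√2)cos γ, (1/2)(1+t√2)sin γ, (1/2)(1−t√2)cos θ, (1/2)(1−t√2)sin θ, 1/√2). Define τ(Φ_t) = −4(∂²Φ_t/∂γ² + ∂²Φ_t/∂θ²) + |dΦ_t|²Φ_t, where |dΦ_t|² = 4(|∂Φ_t/∂γ|² + |∂Φ_t/∂θ|²). Then |τ(Φ_t)(γ,θ)|² = (4 + 8t²)/(t²+1)² for all (γ,θ). -/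
/-!
`Φ_t` is a flat torus `(a cos γ, a sin γ, b cos θ, b sin θ, c)`. Its second derivatives are minus
its two circle components, so with `E = |dΦ|² = 4(a² + b²)` the tension field is the flat torus
with radii `(E - 4)a`, `(E - 4)b` and height `E c`, of squared norm `(E - 4)²(a² + b²) + E²c²`.
For `Φ_t` one has `a² + b² = (1 + 2t²) / (2(1 + t²))` and `c² = 1 / (2(1 + t²))`.
-/

open Real

noncomputable def flatTorus (a b c γ θ : ℝ) : Fin 5 → ℝ :=
  ![a * cos γ, a * sin γ, b * cos θ, b * sin θ, c]

section

variable {n : ℕ}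

noncomputable def energyDensity (Φ : ℝ → ℝ → Fin n → ℝ) (γ θ : ℝ) : ℝ :=
  4 * ((∑ i, (deriv (fun x => Φ x θ i) γ) ^ 2) + (∑ i, (deriv (fun y => Φ γ y i) θ) ^ 2))

noncomputable def tensionField (Φ : ℝ → ℝ → Fin n → ℝ) (γ θ : ℝ) (i : Fin n) : ℝ :=
  -(-4 * (deriv (fun x => deriv (fun x' => Φ x' θ i) x) γ +
      deriv (fun y => deriv (fun y' => Φ γ y' i) y) θ)) + energyDensity Φ γ θ * Φ γ θ i

end

section

variable (a b c γ θ : ℝ)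

theorem sum_sq_flatTorus : ∑ i, flatTorus a b c γ θ i ^ 2 = a ^ 2 + b ^ 2 + c ^ 2 := by
  simp only [Fin.sum_univ_five, flatTorus, Matrix.cons_val_zero, Matrix.cons_val_one,
    Matrix.cons_val]
  linear_combination a ^ 2 * sin_sq_add_cos_sq γ + b ^ 2 * sin_sq_add_cos_sq θ

theorem deriv_flatTorus_fst (i : Fin 5) :
    deriv (fun x => flatTorus a b c x θ i) γ = ![-(a * sin γ), a * cos γ, 0, 0, 0] i := by
  fin_cases i <;> simp [flatTorus]

theorem deriv_flatTorus_snd (i : Fin 5) :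
    deriv (fun y => flatTorus a b c γ y i) θ = ![0, 0, -(b * sin θ), b * cos θ, 0] i := by
  fin_cases i <;> simp [flatTorus]

theorem deriv_deriv_flatTorus_fst (i : Fin 5) :
    deriv (fun x => deriv (fun x' => flatTorus a b c x' θ i) x) γ = -flatTorus a 0 0 γ θ i := by
  simp only [deriv_flatTorus_fst]
  fin_cases i <;> simp [flatTorus]

theorem deriv_deriv_flatTorus_snd (i : Fin 5) :
    deriv (fun y => deriv (fun y' => flatTorus a b c γ y' i) y) θ = -flatTorus 0 b 0 γ θ i := by
  simp only [deriv_flatTorus_snd]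
  fin_cases i <;> simp [flatTorus]

theorem energyDensity_flatTorus : energyDensity (flatTorus a b c) γ θ = 4 * (a ^ 2 + b ^ 2) := by
  simp only [energyDensity, deriv_flatTorus_fst, deriv_flatTorus_snd, Fin.sum_univ_five,
    Matrix.cons_val_zero, Matrix.cons_val_one, Matrix.cons_val]
  linear_combination 4 * a ^ 2 * sin_sq_add_cos_sq γ + 4 * b ^ 2 * sin_sq_add_cos_sq θ

theorem tensionField_flatTorus :
    tensionField (flatTorus a b c) γ θ =
      flatTorus ((4 * (a ^ 2 + b ^ 2) - 4) * a) ((4 * (a ^ 2 + b ^ 2) - 4) * b)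
        (4 * (a ^ 2 + b ^ 2) * c) γ θ := by
  funext i
  simp only [tensionField, deriv_deriv_flatTorus_fst, deriv_deriv_flatTorus_snd,
    energyDensity_flatTorus]
  fin_cases i <;> simp [flatTorus] <;> ring

theorem sum_sq_tensionField_flatTorus :
    ∑ i, tensionField (flatTorus a b c) γ θ i ^ 2 =
      (4 * (a ^ 2 + b ^ 2) - 4) ^ 2 * (a ^ 2 + b ^ 2) + (4 * (a ^ 2 + b ^ 2)) ^ 2 * c ^ 2 := by
  rw [tensionField_flatTorus, sum_sq_flatTorus]
  ring

end

/-- The squared norm of the tension field of the variation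
`Φ_t(γ,θ) = (1/√(1+t²))·((1/2)(1+t√2)cos γ, (1/2)(1+t√2)sin γ,
(1/2)(1−t√2)cos θ, (1/2)(1−t√2)sin θ, 1/√2)` equals `(4+8t²)/(t²+1)²`.
Here `τ(Φ_t) = −ΔΦ_t + |dΦ_t|²Φ_t` with `Δ = −4(∂²/∂γ² + ∂²/∂θ²)` and
`|dΦ_t|² = 4(|∂Φ_t/∂γ|² + |∂Φ_t/∂θ|²)`. -/
theorem tension_field_norm_of_variation
    (t : ℝ) (Φt : ℝ → ℝ → Fin 5 → ℝ)
    (hΦt : ∀ γ θ, Φt γ θ = fun i => (1 / Real.sqrt (1 + t ^ 2)) *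
      (![(1/2) * (1 + t * Real.sqrt 2) * cos γ, (1/2) * (1 + t * Real.sqrt 2) * sin γ,
        (1/2) * (1 - t * Real.sqrt 2) * cos θ, (1/2) * (1 - t * Real.sqrt 2) * sin θ,
        1 / Real.sqrt 2] i))
    (edens : ℝ → ℝ → ℝ)
    (hedens : ∀ γ θ, edens γ θ =
      4 * ((∑ i, (deriv (fun x => Φt x θ i) γ) ^ 2) +
           (∑ i, (deriv (fun y => Φt γ y i) θ) ^ 2)))
    (τ : ℝ → ℝ → Fin 5 → ℝ)
    (hτ : ∀ γ θ i, τ γ θ i =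
      -(-4 * (deriv (fun x => deriv (fun x' => Φt x' θ i) x) γ +
              deriv (fun y => deriv (fun y' => Φt γ y' i) y) θ)) +
        edens γ θ * Φt γ θ i) :
    ∀ γ θ, ∑ i, (τ γ θ i) ^ 2 = (4 + 8 * t ^ 2) / (t ^ 2 + 1) ^ 2 := by
  intro γ θ
  have hs : √(1 + t ^ 2) ^ 2 = 1 + t ^ 2 := sq_sqrt (by positivity)
  have h2 : √2 ^ 2 = 2 := sq_sqrt (by norm_num)
  set a := 1 / √(1 + t ^ 2) * (1 / 2 * (1 + t * √2)) with ha
  set b := 1 / √(1 + t ^ 2) * (1 / 2 * (1 - t * √2)) with hb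
  set c := 1 / √(1 + t ^ 2) * (1 / √2) with hc
  have hΦ : Φt = flatTorus a b c := by
    funext γ θ i
    rw [hΦt]
    fin_cases i <;> simp [flatTorus] <;> ring
  have hτΦ : τ = tensionField (flatTorus a b c) := by
    funext γ θ i
    rw [hτ, hedens, ← hΦ]
    rfl
  have hab : a ^ 2 + b ^ 2 = (1 + 2 * t ^ 2) / (2 * (1 + t ^ 2)) := by
    rw [ha, hb]; field_simp; rw [hs]; linear_combination (2 * t ^ 2 * (1 + t ^ 2)) * h2
  have hc2 : c ^ 2 = 1 / (2 * (1 + t ^ 2)) := by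
    rw [hc]; field_simp; rw [hs, h2]
  rw [hτΦ, sum_sq_tensionField_flatTorus, hab, hc2]
  field_simp
  ring
end

section
/- For all integers m, n ≥ 1 with (m,n) ≠ (1,1), the coefficients of the quartic Q₄(x) = c₄x⁴ + c₃x³ + c₂x² + c₁x + c₀ satisfy c₀ > 0, c₁ < 0, c₂ > 0, c₃ < 0, c₄ > 0, where c₃ = −16(4(m⁴+n⁴) + 8m²n² + 9(m²+n²) − 1), c₂ = 256(6(m⁸+n⁸) + 24(m⁶n²+m²n⁶) + 36m⁴n⁴ + 15(m⁶+n⁶) + 45(m⁴n²+m²n⁴) + 14(m⁴+n⁴) + 44m²n² − 10(m²+n²)), and c₀, c₁ are the explicit polynomials in m², n² given in the context. Consequently, assuming all roots of Q₄ are real, all roots are positive. -/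
set_option maxHeartbeats 1000000

set_option maxHeartbeats 4000000

/-- For integers `m, n ≥ 1` with `(m,n) ≠ (1,1)`, the coefficients of the
quartic factor `Q₄` of the characteristic polynomial of `I₂` on `S^{m,n}`
alternate in sign; consequently every real root of `Q₄` is positive. -/
theorem quartic_factor_roots_positive (m n : ℕ) (hm : 1 ≤ m) (hn : 1 ≤ n)
    (hmn : ¬(m = 1 ∧ n = 1))
    (M N : ℝ) (hM : M = (m : ℝ)) (hN : N = (n : ℝ))
    (c₀ c₁ c₂ c₃ c₄ : ℝ)
    (h₀ : c₀ = 65536 * (M^16 + N^16 + 8*(M^14*N^2 + M^2*N^14) + 28*(M^12*N^4 + M^4*N^12)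
      + 56*(M^10*N^6 + M^6*N^10) + 70*M^8*N^8 - 3*(M^14 + N^14)
      - 21*(M^12*N^2 + M^2*N^12) - 63*(M^10*N^4 + M^4*N^10)
      - 105*(M^8*N^6 + M^6*N^8) + 16*(M^10*N^2 + M^2*N^10)
      + 64*(M^8*N^4 + M^4*N^8) + 96*M^6*N^6 + 7*(M^10 + N^10)
      - 21*(M^8*N^2 + M^2*N^8) - 98*(M^6*N^4 + M^4*N^6) - 3*(M^8 + N^8)
      + 12*(M^6*N^2 + M^2*N^6) + 94*M^4*N^4 - 4*(M^6 + N^6)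
      - 12*(M^4*N^2 + M^2*N^4) + 2*(M^4 + N^4) + 12*M^2*N^2))
    (h₁ : c₁ = -4096 * (4*(M^12 + N^12) + 24*(M^10*N^2 + M^2*N^10)
      + 60*(M^8*N^4 + M^4*N^8) + 80*M^6*N^6 + 3*(M^10 + N^10)
      + 15*(M^8*N^2 + M^2*N^8) + 30*(M^6*N^4 + M^4*N^6) + 15*(M^8 + N^8)
      - 36*(M^6*N^2 + M^2*N^6) - 102*M^4*N^4 + M^6 + N^6
      + 11*(M^4*N^2 + M^2*N^4) - 15*(M^4 + N^4) - 46*M^2*N^2 + 2*(M^2 + N^2)))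
    (h₂ : c₂ = 256 * (6*(M^8 + N^8) + 24*(M^6*N^2 + M^2*N^6) + 36*M^4*N^4
      + 15*(M^6 + N^6) + 45*(M^4*N^2 + M^2*N^4) + 14*(M^4 + N^4)
      + 44*M^2*N^2 - 10*(M^2 + N^2)))
    (h₃ : c₃ = -16 * (4*(M^4 + N^4) + 8*M^2*N^2 + 9*(M^2 + N^2) - 1))
    (h₄ : c₄ = 1)
    (Q₄ : ℝ → ℝ)
    (hQ : ∀ x, Q₄ x = c₄ * x^4 + c₃ * x^3 + c₂ * x^2 + c₁ * x + c₀) :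
    0 < c₀ ∧ c₁ < 0 ∧ 0 < c₂ ∧ c₃ < 0 ∧ 0 < c₄ ∧
      ∀ x : ℝ, Q₄ x = 0 → 0 < x := by
  subst hM hN h₀ h₁ h₂ h₃ h₄
  have hM1 : (1:ℝ) ≤ (m:ℝ) := by exact_mod_cast hm
  have hN1 : (1:ℝ) ≤ (n:ℝ) := by exact_mod_cast hn
  obtain ⟨a, hadef⟩ : ∃ a : ℝ, a = (m:ℝ)^2 - 1 := ⟨_, rfl⟩
  obtain ⟨b, hbdef⟩ : ∃ b : ℝ, b = (n:ℝ)^2 - 1 := ⟨_, rfl⟩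
  have ha : 0 ≤ a := by rw [hadef]; nlinarith
  have hb : 0 ≤ b := by rw [hbdef]; nlinarith
  have hab : 3 ≤ a + b := by
    rcases Nat.lt_or_ge m 2 with h | h
    · have hn2 : 2 ≤ n := by omega
      have h2 : (2:ℝ) ≤ (n:ℝ) := by exact_mod_cast hn2
      rw [hadef, hbdef]; nlinarith
    · have h2 : (2:ℝ) ≤ (m:ℝ) := by exact_mod_cast h
      rw [hadef, hbdef]; nlinarith
  have hc0 : (0:ℝ) < 65536 * ((m:ℝ)^16 + (n:ℝ)^16 + 8*((m:ℝ)^14*(n:ℝ)^2 + (m:ℝ)^2*(n:ℝ)^14) + 28*((m:ℝ)^12*(n:ℝ)^4 + (m:ℝ)^4*(n:ℝ)^12)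
      + 56*((m:ℝ)^10*(n:ℝ)^6 + (m:ℝ)^6*(n:ℝ)^10) + 70*(m:ℝ)^8*(n:ℝ)^8 - 3*((m:ℝ)^14 + (n:ℝ)^14)
      - 21*((m:ℝ)^12*(n:ℝ)^2 + (m:ℝ)^2*(n:ℝ)^12) - 63*((m:ℝ)^10*(n:ℝ)^4 + (m:ℝ)^4*(n:ℝ)^10)
      - 105*((m:ℝ)^8*(n:ℝ)^6 + (m:ℝ)^6*(n:ℝ)^8) + 16*((m:ℝ)^10*(n:ℝ)^2 + (m:ℝ)^2*(n:ℝ)^10)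
      + 64*((m:ℝ)^8*(n:ℝ)^4 + (m:ℝ)^4*(n:ℝ)^8) + 96*(m:ℝ)^6*(n:ℝ)^6 + 7*((m:ℝ)^10 + (n:ℝ)^10)
      - 21*((m:ℝ)^8*(n:ℝ)^2 + (m:ℝ)^2*(n:ℝ)^8) - 98*((m:ℝ)^6*(n:ℝ)^4 + (m:ℝ)^4*(n:ℝ)^6) - 3*((m:ℝ)^8 + (n:ℝ)^8)
      + 12*((m:ℝ)^6*(n:ℝ)^2 + (m:ℝ)^2*(n:ℝ)^6) + 94*(m:ℝ)^4*(n:ℝ)^4 - 4*((m:ℝ)^6 + (n:ℝ)^6)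
      - 12*((m:ℝ)^4*(n:ℝ)^2 + (m:ℝ)^2*(n:ℝ)^4) + 2*((m:ℝ)^4 + (n:ℝ)^4) + 12*(m:ℝ)^2*(n:ℝ)^2) := by
    have key : 65536 * ((m:ℝ)^16 + (n:ℝ)^16 + 8*((m:ℝ)^14*(n:ℝ)^2 + (m:ℝ)^2*(n:ℝ)^14) + 28*((m:ℝ)^12*(n:ℝ)^4 + (m:ℝ)^4*(n:ℝ)^12)
      + 56*((m:ℝ)^10*(n:ℝ)^6 + (m:ℝ)^6*(n:ℝ)^10) + 70*(m:ℝ)^8*(n:ℝ)^8 - 3*((m:ℝ)^14 + (n:ℝ)^14)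
      - 21*((m:ℝ)^12*(n:ℝ)^2 + (m:ℝ)^2*(n:ℝ)^12) - 63*((m:ℝ)^10*(n:ℝ)^4 + (m:ℝ)^4*(n:ℝ)^10)
      - 105*((m:ℝ)^8*(n:ℝ)^6 + (m:ℝ)^6*(n:ℝ)^8) + 16*((m:ℝ)^10*(n:ℝ)^2 + (m:ℝ)^2*(n:ℝ)^10)
      + 64*((m:ℝ)^8*(n:ℝ)^4 + (m:ℝ)^4*(n:ℝ)^8) + 96*(m:ℝ)^6*(n:ℝ)^6 + 7*((m:ℝ)^10 + (n:ℝ)^10)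
      - 21*((m:ℝ)^8*(n:ℝ)^2 + (m:ℝ)^2*(n:ℝ)^8) - 98*((m:ℝ)^6*(n:ℝ)^4 + (m:ℝ)^4*(n:ℝ)^6) - 3*((m:ℝ)^8 + (n:ℝ)^8)
      + 12*((m:ℝ)^6*(n:ℝ)^2 + (m:ℝ)^2*(n:ℝ)^6) + 94*(m:ℝ)^4*(n:ℝ)^4 - 4*((m:ℝ)^6 + (n:ℝ)^6)
      - 12*((m:ℝ)^4*(n:ℝ)^2 + (m:ℝ)^2*(n:ℝ)^4) + 2*((m:ℝ)^4 + (n:ℝ)^4) + 12*(m:ℝ)^2*(n:ℝ)^2)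
      = 65536 * (80*a + 80*b + (314*b^2 + 508*b^3 + 435*b^4 + 219*b^5 + 70*b^6 + 13*b^7 + 1*b^8 + 668*a*b + 1588*a*b^2 + 1812*a*b^3 + 1167*a*b^4 + 436*a*b^5 + 91*a*b^6 + 8*a*b^7 + 314*a^2 + 1588*a^2*b + 2818*a^2*b^2 + 2406*a^2*b^3 + 1114*a^2*b^4 + 273*a^2*b^5 + 28*a^2*b^6 + 508*a^3 + 1812*a^3*b + 2406*a^3*b^2 + 1496*a^3*b^3 + 455*a^3*b^4 + 56*a^3*b^5 + 435*a^4 + 1167*a^4*b + 1114*a^4*b^2 + 455*a^4*b^3 + 70*a^4*b^4 + 219*a^5 + 436*a^5*b + 273*a^5*b^2 + 56*a^5*b^3 + 70*a^6 + 91*a^6*b + 28*a^6*b^2 + 13*a^7 + 8*a^7*b + 1*a^8)) := by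
      rw [hadef, hbdef]; ring
    rw [key]
    have hrest : (0:ℝ) ≤ 314*b^2 + 508*b^3 + 435*b^4 + 219*b^5 + 70*b^6 + 13*b^7 + 1*b^8 + 668*a*b + 1588*a*b^2 + 1812*a*b^3 + 1167*a*b^4 + 436*a*b^5 + 91*a*b^6 + 8*a*b^7 + 314*a^2 + 1588*a^2*b + 2818*a^2*b^2 + 2406*a^2*b^3 + 1114*a^2*b^4 + 273*a^2*b^5 + 28*a^2*b^6 + 508*a^3 + 1812*a^3*b + 2406*a^3*b^2 + 1496*a^3*b^3 + 455*a^3*b^4 + 56*a^3*b^5 + 435*a^4 + 1167*a^4*b + 1114*a^4*b^2 + 455*a^4*b^3 + 70*a^4*b^4 + 219*a^5 + 436*a^5*b + 273*a^5*b^2 + 56*a^5*b^3 + 70*a^6 + 91*a^6*b + 28*a^6*b^2 + 13*a^7 + 8*a^7*b + 1*a^8 :=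
      (add_nonneg (add_nonneg (add_nonneg (add_nonneg (add_nonneg (add_nonneg (add_nonneg (add_nonneg (add_nonneg (add_nonneg (add_nonneg (add_nonneg (add_nonneg (add_nonneg (add_nonneg (add_nonneg (add_nonneg (add_nonneg (add_nonneg (add_nonneg (add_nonneg (add_nonneg (add_nonneg (add_nonneg (add_nonneg (add_nonneg (add_nonneg (add_nonneg (add_nonneg (add_nonneg (add_nonneg (add_nonneg (add_nonneg (add_nonneg (add_nonneg (add_nonneg (add_nonneg (add_nonneg (add_nonneg (add_nonneg (add_nonneg (mul_nonneg (by norm_num : (0:ℝ) ≤ 314) (pow_nonneg hb 2)) (mul_nonneg (by norm_num : (0:ℝ) ≤ 508) (pow_nonneg hb 3))) (mul_nonneg (by norm_num : (0:ℝ) ≤ 435) (pow_nonneg hb 4))) (mul_nonneg (by norm_num : (0:ℝ) ≤ 219) (pow_nonneg hb 5))) (mul_nonneg (by norm_num : (0:ℝ) ≤ 70) (pow_nonneg hb 6))) (mul_nonneg (by norm_num : (0:ℝ) ≤ 13) (pow_nonneg hb 7))) (mul_nonneg (by norm_num : (0:ℝ) ≤ 1) (pow_nonneg hb 8))) (mul_nonneg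 (mul_nonneg (by norm_num : (0:ℝ) ≤ 668) ha) hb)) (mul_nonneg (mul_nonneg (by norm_num : (0:ℝ) ≤ 1588) ha) (pow_nonneg hb 2))) (mul_nonneg (mul_nonneg (by norm_num : (0:ℝ) ≤ 1812) ha) (pow_nonneg hb 3))) (mul_nonneg (mul_nonneg (by norm_num : (0:ℝ) ≤ 1167) ha) (pow_nonneg hb 4))) (mul_nonneg (mul_nonneg (by norm_num : (0:ℝ) ≤ 436) ha) (pow_nonneg hb 5))) (mul_nonneg (mul_nonneg (by norm_num : (0:ℝ) ≤ 91) ha) (pow_nonneg hb 6))) (mul_nonneg (mul_nonneg (by norm_num : (0:ℝ) ≤ 8) ha) (pow_nonneg hb 7))) (mul_nonneg (by norm_num : (0:ℝ) ≤ 314) (pow_nonneg ha 2))) (mul_nonneg (mul_nonneg (by norm_num : (0:ℝ) ≤ 1588) (pow_nonneg ha 2)) hb)) (mul_nonneg (mul_nonneg (by norm_num : (0:ℝ) ≤ 2818) (pow_nonneg ha 2)) (pow_nonneg hb 2))) (mul_nonneg (mul_nonneg (by norm_num : (0:ℝ) ≤ 2406) (pow_nonneg ha 2)) (pow_nonneg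 hb 3))) (mul_nonneg (mul_nonneg (by norm_num : (0:ℝ) ≤ 1114) (pow_nonneg ha 2)) (pow_nonneg hb 4))) (mul_nonneg (mul_nonneg (by norm_num : (0:ℝ) ≤ 273) (pow_nonneg ha 2)) (pow_nonneg hb 5))) (mul_nonneg (mul_nonneg (by norm_num : (0:ℝ) ≤ 28) (pow_nonneg ha 2)) (pow_nonneg hb 6))) (mul_nonneg (by norm_num : (0:ℝ) ≤ 508) (pow_nonneg ha 3))) (mul_nonneg (mul_nonneg (by norm_num : (0:ℝ) ≤ 1812) (pow_nonneg ha 3)) hb)) (mul_nonneg (mul_nonneg (by norm_num : (0:ℝ) ≤ 2406) (pow_nonneg ha 3)) (pow_nonneg hb 2))) (mul_nonneg (mul_nonneg (by norm_num : (0:ℝ) ≤ 1496) (pow_nonneg ha 3)) (pow_nonneg hb 3))) (mul_nonneg (mul_nonneg (by norm_num : (0:ℝ) ≤ 455) (pow_nonneg ha 3)) (pow_nonneg hb 4))) (mul_nonneg (mul_nonneg (by norm_num : (0:ℝ) ≤ 56) (pow_nonneg ha 3)) (pow_nonneg hb 5))) (mul_nonneg (by norm_num : (0:ℝ) ≤ 435)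 (pow_nonneg ha 4))) (mul_nonneg (mul_nonneg (by norm_num : (0:ℝ) ≤ 1167) (pow_nonneg ha 4)) hb)) (mul_nonneg (mul_nonneg (by norm_num : (0:ℝ) ≤ 1114) (pow_nonneg ha 4)) (pow_nonneg hb 2))) (mul_nonneg (mul_nonneg (by norm_num : (0:ℝ) ≤ 455) (pow_nonneg ha 4)) (pow_nonneg hb 3))) (mul_nonneg (mul_nonneg (by norm_num : (0:ℝ) ≤ 70) (pow_nonneg ha 4)) (pow_nonneg hb 4))) (mul_nonneg (by norm_num : (0:ℝ) ≤ 219) (pow_nonneg ha 5))) (mul_nonneg (mul_nonneg (by norm_num : (0:ℝ) ≤ 436) (pow_nonneg ha 5)) hb)) (mul_nonneg (mul_nonneg (by norm_num : (0:ℝ) ≤ 273) (pow_nonneg ha 5)) (pow_nonneg hb 2))) (mul_nonneg (mul_nonneg (by norm_num : (0:ℝ) ≤ 56) (pow_nonneg ha 5)) (pow_nonneg hb 3))) (mul_nonneg (by norm_num : (0:ℝ) ≤ 70) (pow_nonneg ha 6))) (mul_nonneg (mul_nonneg (by norm_num : (0:ℝ) ≤ 91) (pow_nonneg ha 6)) hb))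 (mul_nonneg (mul_nonneg (by norm_num : (0:ℝ) ≤ 28) (pow_nonneg ha 6)) (pow_nonneg hb 2))) (mul_nonneg (by norm_num : (0:ℝ) ≤ 13) (pow_nonneg ha 7))) (mul_nonneg (mul_nonneg (by norm_num : (0:ℝ) ≤ 8) (pow_nonneg ha 7)) hb)) (mul_nonneg (by norm_num : (0:ℝ) ≤ 1) (pow_nonneg ha 8)))
    linarith [hrest, hab]
  have hc1 : (-4096:ℝ) * (4*((m:ℝ)^12 + (n:ℝ)^12) + 24*((m:ℝ)^10*(n:ℝ)^2 + (m:ℝ)^2*(n:ℝ)^10)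
      + 60*((m:ℝ)^8*(n:ℝ)^4 + (m:ℝ)^4*(n:ℝ)^8) + 80*(m:ℝ)^6*(n:ℝ)^6 + 3*((m:ℝ)^10 + (n:ℝ)^10)
      + 15*((m:ℝ)^8*(n:ℝ)^2 + (m:ℝ)^2*(n:ℝ)^8) + 30*((m:ℝ)^6*(n:ℝ)^4 + (m:ℝ)^4*(n:ℝ)^6) + 15*((m:ℝ)^8 + (n:ℝ)^8)
      - 36*((m:ℝ)^6*(n:ℝ)^2 + (m:ℝ)^2*(n:ℝ)^6) - 102*(m:ℝ)^4*(n:ℝ)^4 + (m:ℝ)^6 + (n:ℝ)^6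
      + 11*((m:ℝ)^4*(n:ℝ)^2 + (m:ℝ)^2*(n:ℝ)^4) - 15*((m:ℝ)^4 + (n:ℝ)^4) - 46*(m:ℝ)^2*(n:ℝ)^2 + 2*((m:ℝ)^2 + (n:ℝ)^2)) < 0 := by
    have key : (-4096:ℝ) * (4*((m:ℝ)^12 + (n:ℝ)^12) + 24*((m:ℝ)^10*(n:ℝ)^2 + (m:ℝ)^2*(n:ℝ)^10)
      + 60*((m:ℝ)^8*(n:ℝ)^4 + (m:ℝ)^4*(n:ℝ)^8) + 80*(m:ℝ)^6*(n:ℝ)^6 + 3*((m:ℝ)^10 + (n:ℝ)^10)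
      + 15*((m:ℝ)^8*(n:ℝ)^2 + (m:ℝ)^2*(n:ℝ)^8) + 30*((m:ℝ)^6*(n:ℝ)^4 + (m:ℝ)^4*(n:ℝ)^6) + 15*((m:ℝ)^8 + (n:ℝ)^8)
      - 36*((m:ℝ)^6*(n:ℝ)^2 + (m:ℝ)^2*(n:ℝ)^6) - 102*(m:ℝ)^4*(n:ℝ)^4 + (m:ℝ)^6 + (n:ℝ)^6
      + 11*((m:ℝ)^4*(n:ℝ)^2 + (m:ℝ)^2*(n:ℝ)^4) - 15*((m:ℝ)^4 + (n:ℝ)^4) - 46*(m:ℝ)^2*(n:ℝ)^2 + 2*((m:ℝ)^2 + (n:ℝ)^2))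
      = -4096 * (160 + (682*b + 1079*b^2 + 785*b^3 + 285*b^4 + 51*b^5 + 4*b^6 + 682*a + 1774*a*b + 1979*a*b^2 + 1044*a*b^3 + 255*a*b^4 + 24*a*b^5 + 1079*a^2 + 1979*a^2*b + 1518*a^2*b^2 + 510*a^2*b^3 + 60*a^2*b^4 + 785*a^3 + 1044*a^3*b + 510*a^3*b^2 + 80*a^3*b^3 + 285*a^4 + 255*a^4*b + 60*a^4*b^2 + 51*a^5 + 24*a^5*b + 4*a^6)) := by
      rw [hadef, hbdef]; ring
    rw [key]
    have hrest : (0:ℝ) ≤ 682*b + 1079*b^2 + 785*b^3 + 285*b^4 + 51*b^5 + 4*b^6 + 682*a + 1774*a*b + 1979*a*b^2 + 1044*a*b^3 + 255*a*b^4 + 24*a*b^5 + 1079*a^2 + 1979*a^2*b + 1518*a^2*b^2 + 510*a^2*b^3 + 60*a^2*b^4 + 785*a^3 + 1044*a^3*b + 510*a^3*b^2 + 80*a^3*b^3 + 285*a^4 + 255*a^4*b + 60*a^4*b^2 + 51*a^5 + 24*a^5*b + 4*a^6 :=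
      (add_nonneg (add_nonneg (add_nonneg (add_nonneg (add_nonneg (add_nonneg (add_nonneg (add_nonneg (add_nonneg (add_nonneg (add_nonneg (add_nonneg (add_nonneg (add_nonneg (add_nonneg (add_nonneg (add_nonneg (add_nonneg (add_nonneg (add_nonneg (add_nonneg (add_nonneg (add_nonneg (add_nonneg (add_nonneg (add_nonneg (mul_nonneg (by norm_num : (0:ℝ) ≤ 682) hb) (mul_nonneg (by norm_num : (0:ℝ) ≤ 1079) (pow_nonneg hb 2))) (mul_nonneg (by norm_num : (0:ℝ) ≤ 785) (pow_nonneg hb 3))) (mul_nonneg (by norm_num : (0:ℝ) ≤ 285) (pow_nonneg hb 4))) (mul_nonneg (by norm_num : (0:ℝ) ≤ 51) (pow_nonneg hb 5))) (mul_nonneg (by norm_num : (0:ℝ) ≤ 4) (pow_nonneg hb 6))) (mul_nonneg (by norm_num : (0:ℝ) ≤ 682) ha)) (mul_nonneg (mul_nonneg (by norm_num : (0:ℝ) ≤ 1774) ha) hb)) (mul_nonneg (mul_nonneg (by norm_num : (0:ℝ) ≤ 1979) ha) (pow_nonneg hb 2))) (mul_nonneg (mul_nonneg (by norm_num : (0:ℝ)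 ≤ 1044) ha) (pow_nonneg hb 3))) (mul_nonneg (mul_nonneg (by norm_num : (0:ℝ) ≤ 255) ha) (pow_nonneg hb 4))) (mul_nonneg (mul_nonneg (by norm_num : (0:ℝ) ≤ 24) ha) (pow_nonneg hb 5))) (mul_nonneg (by norm_num : (0:ℝ) ≤ 1079) (pow_nonneg ha 2))) (mul_nonneg (mul_nonneg (by norm_num : (0:ℝ) ≤ 1979) (pow_nonneg ha 2)) hb)) (mul_nonneg (mul_nonneg (by norm_num : (0:ℝ) ≤ 1518) (pow_nonneg ha 2)) (pow_nonneg hb 2))) (mul_nonneg (mul_nonneg (by norm_num : (0:ℝ) ≤ 510) (pow_nonneg ha 2)) (pow_nonneg hb 3))) (mul_nonneg (mul_nonneg (by norm_num : (0:ℝ) ≤ 60) (pow_nonneg ha 2)) (pow_nonneg hb 4))) (mul_nonneg (by norm_num : (0:ℝ) ≤ 785) (pow_nonneg ha 3))) (mul_nonneg (mul_nonneg (by norm_num : (0:ℝ) ≤ 1044) (pow_nonneg ha 3)) hb)) (mul_nonneg (mul_nonneg (by norm_num : (0:ℝ) ≤ 510) (pow_nonneg ha 3)) (pow_nonneg hb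 2))) (mul_nonneg (mul_nonneg (by norm_num : (0:ℝ) ≤ 80) (pow_nonneg ha 3)) (pow_nonneg hb 3))) (mul_nonneg (by norm_num : (0:ℝ) ≤ 285) (pow_nonneg ha 4))) (mul_nonneg (mul_nonneg (by norm_num : (0:ℝ) ≤ 255) (pow_nonneg ha 4)) hb)) (mul_nonneg (mul_nonneg (by norm_num : (0:ℝ) ≤ 60) (pow_nonneg ha 4)) (pow_nonneg hb 2))) (mul_nonneg (by norm_num : (0:ℝ) ≤ 51) (pow_nonneg ha 5))) (mul_nonneg (mul_nonneg (by norm_num : (0:ℝ) ≤ 24) (pow_nonneg ha 5)) hb)) (mul_nonneg (by norm_num : (0:ℝ) ≤ 4) (pow_nonneg ha 6)))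
    linarith [hrest]
  have hc2 : (0:ℝ) < 256 * (6*((m:ℝ)^8 + (n:ℝ)^8) + 24*((m:ℝ)^6*(n:ℝ)^2 + (m:ℝ)^2*(n:ℝ)^6) + 36*(m:ℝ)^4*(n:ℝ)^4
      + 15*((m:ℝ)^6 + (n:ℝ)^6) + 45*((m:ℝ)^4*(n:ℝ)^2 + (m:ℝ)^2*(n:ℝ)^4) + 14*((m:ℝ)^4 + (n:ℝ)^4)
      + 44*(m:ℝ)^2*(n:ℝ)^2 - 10*((m:ℝ)^2 + (n:ℝ)^2)) := by
    have key : (256:ℝ) * (6*((m:ℝ)^8 + (n:ℝ)^8) + 24*((m:ℝ)^6*(n:ℝ)^2 + (m:ℝ)^2*(n:ℝ)^6) + 36*(m:ℝ)^4*(n:ℝ)^4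
      + 15*((m:ℝ)^6 + (n:ℝ)^6) + 45*((m:ℝ)^4*(n:ℝ)^2 + (m:ℝ)^2*(n:ℝ)^4) + 14*((m:ℝ)^4 + (n:ℝ)^4)
      + 44*(m:ℝ)^2*(n:ℝ)^2 - 10*((m:ℝ)^2 + (n:ℝ)^2))
      = 256 * (268 + (434*b + 248*b^2 + 63*b^3 + 6*b^4 + 434*a + 512*a*b + 189*a*b^2 + 24*a*b^3 + 248*a^2 + 189*a^2*b + 36*a^2*b^2 + 63*a^3 + 24*a^3*b + 6*a^4)) := by
      rw [hadef, hbdef]; ring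
    rw [key]
    have hrest : (0:ℝ) ≤ 434*b + 248*b^2 + 63*b^3 + 6*b^4 + 434*a + 512*a*b + 189*a*b^2 + 24*a*b^3 + 248*a^2 + 189*a^2*b + 36*a^2*b^2 + 63*a^3 + 24*a^3*b + 6*a^4 :=
      (add_nonneg (add_nonneg (add_nonneg (add_nonneg (add_nonneg (add_nonneg (add_nonneg (add_nonneg (add_nonneg (add_nonneg (add_nonneg (add_nonneg (add_nonneg (mul_nonneg (by norm_num : (0:ℝ) ≤ 434) hb) (mul_nonneg (by norm_num : (0:ℝ) ≤ 248) (pow_nonneg hb 2))) (mul_nonneg (by norm_num : (0:ℝ) ≤ 63) (pow_nonneg hb 3))) (mul_nonneg (by norm_num : (0:ℝ) ≤ 6) (pow_nonneg hb 4))) (mul_nonneg (by norm_num : (0:ℝ) ≤ 434) ha)) (mul_nonneg (mul_nonneg (by norm_num : (0:ℝ) ≤ 512) ha) hb)) (mul_nonneg (mul_nonneg (by norm_num : (0:ℝ) ≤ 189) ha) (pow_nonneg hb 2))) (mul_nonneg (mul_nonneg (by norm_num : (0:ℝ) ≤ 24) ha) (pow_nonneg hb 3))) (mul_nonneg (by norm_num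 : (0:ℝ) ≤ 248) (pow_nonneg ha 2))) (mul_nonneg (mul_nonneg (by norm_num : (0:ℝ) ≤ 189) (pow_nonneg ha 2)) hb)) (mul_nonneg (mul_nonneg (by norm_num : (0:ℝ) ≤ 36) (pow_nonneg ha 2)) (pow_nonneg hb 2))) (mul_nonneg (by norm_num : (0:ℝ) ≤ 63) (pow_nonneg ha 3))) (mul_nonneg (mul_nonneg (by norm_num : (0:ℝ) ≤ 24) (pow_nonneg ha 3)) hb)) (mul_nonneg (by norm_num : (0:ℝ) ≤ 6) (pow_nonneg ha 4)))
    linarith [hrest]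
  have hc3 : (-16:ℝ) * (4*((m:ℝ)^4 + (n:ℝ)^4) + 8*(m:ℝ)^2*(n:ℝ)^2 + 9*((m:ℝ)^2 + (n:ℝ)^2) - 1) < 0 := by
    nlinarith [ha, hb, hadef, hbdef, sq_nonneg ((m:ℝ)*(n:ℝ)), hM1, hN1, mul_le_mul hM1 hM1 (by norm_num) (by linarith)]
  refine ⟨hc0, hc1, hc2, hc3, by norm_num, ?_⟩
  intro x hx
  rw [hQ x] at hx
  by_contra hx0
  push_neg at hx0
  have hx3 : x^3 ≤ 0 := by nlinarith [sq_nonneg x]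
  have t4 : (0:ℝ) ≤ 1 * x^4 := by positivity
  have t3 : (0:ℝ) ≤ (-16 * (4*((m:ℝ)^4 + (n:ℝ)^4) + 8*(m:ℝ)^2*(n:ℝ)^2 + 9*((m:ℝ)^2 + (n:ℝ)^2) - 1)) * x^3 :=
    by
    have h := mul_nonneg (neg_nonneg.2 hc3.le) (neg_nonneg.2 hx3)
    rw [neg_mul_neg] at h
    exact h
  have t2 : (0:ℝ) ≤ (256 * (6*((m:ℝ)^8 + (n:ℝ)^8) + 24*((m:ℝ)^6*(n:ℝ)^2 + (m:ℝ)^2*(n:ℝ)^6) + 36*(m:ℝ)^4*(n:ℝ)^4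
      + 15*((m:ℝ)^6 + (n:ℝ)^6) + 45*((m:ℝ)^4*(n:ℝ)^2 + (m:ℝ)^2*(n:ℝ)^4) + 14*((m:ℝ)^4 + (n:ℝ)^4)
      + 44*(m:ℝ)^2*(n:ℝ)^2 - 10*((m:ℝ)^2 + (n:ℝ)^2))) * x^2 :=
    mul_nonneg hc2.le (sq_nonneg x)
  have t1 : (0:ℝ) ≤ (-4096 * (4*((m:ℝ)^12 + (n:ℝ)^12) + 24*((m:ℝ)^10*(n:ℝ)^2 + (m:ℝ)^2*(n:ℝ)^10)
      + 60*((m:ℝ)^8*(n:ℝ)^4 + (m:ℝ)^4*(n:ℝ)^8) + 80*(m:ℝ)^6*(n:ℝ)^6 + 3*((m:ℝ)^10 + (n:ℝ)^10)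
      + 15*((m:ℝ)^8*(n:ℝ)^2 + (m:ℝ)^2*(n:ℝ)^8) + 30*((m:ℝ)^6*(n:ℝ)^4 + (m:ℝ)^4*(n:ℝ)^6) + 15*((m:ℝ)^8 + (n:ℝ)^8)
      - 36*((m:ℝ)^6*(n:ℝ)^2 + (m:ℝ)^2*(n:ℝ)^6) - 102*(m:ℝ)^4*(n:ℝ)^4 + (m:ℝ)^6 + (n:ℝ)^6
      + 11*((m:ℝ)^4*(n:ℝ)^2 + (m:ℝ)^2*(n:ℝ)^4) - 15*((m:ℝ)^4 + (n:ℝ)^4) - 46*(m:ℝ)^2*(n:ℝ)^2 + 2*((m:ℝ)^2 + (n:ℝ)^2))) * x :=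
    by
    have h := mul_nonneg (neg_nonneg.2 hc1.le) (neg_nonneg.2 hx0)
    rw [neg_mul_neg] at h
    exact h
  linarith [hx, hc0, t1, t2, t3, t4]
end

section
/- With R₁ = R₂ = 1/2 and 0 < η < π/2, 0 < ν < π/2, the only point satisfying simultaneously ∂Ê₂/∂η = 0, ∂Ê₂/∂ν = 0, sin η sin ν = 1/2, and sin η cos ν = 1/2 is (η,ν) = (π/4, π/4). -/
open Real

/-- With `R₁ = R₂ = 1/2` and `0 < η, ν < π/2`, the only point which is
simultaneously a critical point of the reduced bienergy `Ê₂` and satisfies the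
isometric-immersion conditions `sin η sin ν = 1/2`, `sin η cos ν = 1/2` is
`(η, ν) = (π/4, π/4)`. -/
theorem reduced_bienergy_unique_critical_immersion
    (R₁ R₂ c : ℝ) (hR₁ : R₁ = 1/2) (hR₂ : R₂ = 1/2)
    (hc : c = 1 / (32 * R₁ ^ 4 * R₂ ^ 4))
    (E : ℝ → ℝ → ℝ)
    (hE : ∀ η ν, E η ν = c *
      ((5 * R₁^4 - 2 * R₁^2 * R₂^2 + 5 * R₂^4
          + (3 * R₁^4 + 2 * R₁^2 * R₂^2 + 3 * R₂^4) * cos (2 * η)) * sin η ^ 2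
        - 2 * (R₁^2 - R₂^2)^2 * cos (4 * ν) * sin η ^ 4
        + 2 * (R₁^4 - R₂^4) * cos (2 * ν) * sin (2 * η) ^ 2))
    (η ν : ℝ) (hη : 0 < η ∧ η < π/2) (hν : 0 < ν ∧ ν < π/2)
    (hcritη : deriv (fun x => E x ν) η = 0)
    (hcritν : deriv (fun y => E η y) ν = 0)
    (him₁ : sin η * sin ν = 1/2) (him₂ : sin η * cos ν = 1/2) :
    η = π/4 ∧ ν = π/4 := by
  obtain ⟨hη0, hη1⟩ := hη
  obtain ⟨hν0, hν1⟩ := hν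
  have hsη : 0 < sin η := sin_pos_of_pos_of_lt_pi hη0 (hη1.trans (by linarith [pi_pos]))
  have hsν : sin ν = cos ν := by
    have := him₁.trans him₂.symm
    exact mul_left_cancel₀ (ne_of_gt hsη) this
  have hνπ4 : ν = π/4 := by
    have h1 : sin ν = sin (π/2 - ν) := by rw [sin_pi_div_two_sub, hsν]
    have h2 : ν = π/2 - ν := by
      apply injOn_sin ⟨le_of_lt (by linarith [pi_pos]), le_of_lt hν1⟩
        ⟨by linarith [pi_pos], by linarith⟩ h1
    linarith
  have hηπ4 : η = π/4 := by
    have hs2 : Real.sqrt 2 > 0 := by positivity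
    have h3 : sin η = Real.sqrt 2 / 2 := by
      have h4 : sin ν = Real.sqrt 2 / 2 := by rw [hνπ4, sin_pi_div_four]
      have h5 : sin η * (Real.sqrt 2 / 2) = 1/2 := by rw [← h4]; exact him₁
      have h6 : Real.sqrt 2 * Real.sqrt 2 = 2 := Real.mul_self_sqrt (by norm_num)
      field_simp at h5 ⊢
      nlinarith [h5, h6]
    have h1 : sin η = sin (π/4) := by rw [h3, sin_pi_div_four]
    exact injOn_sin ⟨le_of_lt (by linarith [pi_pos]), le_of_lt hη1⟩
      ⟨by linarith [pi_pos], by linarith [pi_pos]⟩ h1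
  exact ⟨hηπ4, hνπ4⟩
end
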